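/- arXiv:1109.3623 — 2 statements merged into one kernel-verified Lean document; each statement's English description precedes it below -/
import Mathlib

section
/- The number of 2n×k matrices over F₂ of rank 1 which are vertical stacks of n persymmetric (Hankel) 2×k blocks — i.e. whose (2j-1)-th and (2j)-th rows are (α₁^{(j)},…,α_k^{(j)}) and (α₂^{(j)},…,α_{k+1}^{(j)}) for sequences α^{(j)} ∈ F₂^{k+1} — equals 3·(2ⁿ−1), provided k ≥ 2. -/
/-- The `2n × k` matrix over `F₂` built from `n` vectors `α⁽ʲ⁾ ∈ F₂^{k+1}`:
rows `2j` and `2j+1` (0-indexed) are the two consecutive length-`k` windows of `α⁽ʲ⁾`. -/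
def persMat (n k : ℕ) (α : Fin n → Fin (k+1) → ZMod 2) :
    Matrix (Fin (2*n)) (Fin k) (ZMod 2) :=
  fun i j => α ⟨i.val / 2, by have := i.isLt; omega⟩
               ⟨j.val + i.val % 2, by have := j.isLt; omega⟩

/-- `Gamma n k i` = number of `n`-times persymmetric `2n × k` matrices over `F₂` of rank `i`. -/
noncomputable def Gamma (n k i : ℕ) : ℕ :=
  Nat.card {α : Fin n → Fin (k+1) → ZMod 2 // (persMat n k α).rank = i}

/-!
Over `F₂` a matrix has rank one iff it is nonzero and all of its nonzero rows are equal to one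
vector `v`. Applied to a single block, whose rows are the windows `init a` and `tail a` of
`a ∈ F₂^{k+1}`, this forces `a ∈ {e₀, e_k, 𝟙}`, with `v` equal to `init e₀`, `tail e_k` or `𝟙`.
For `k ≥ 2` these three rows are distinct, so all nonzero blocks of a rank-one matrix coincide.
The rank-one matrices are therefore the nonzero tuples `α` with entries in `{0, a}` for one of the
three sequences `a`, and there are `3 (2ⁿ - 1)` of them.
-/

open Module Submodule

namespace Fin

variable {k : ℕ} {M : Type*}

theorem eq_const_of_init_eq_tail {a : Fin (k + 1) → M} (h : init a = tail a) (i : Fin (k + 1)) :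
    a i = a 0 := by
  induction i using Fin.induction with
  | zero => rfl
  | succ i ih => exact (congrFun h i).symm.trans ih

variable [Zero M]

theorem eq_single_zero_of_tail_eq_zero {a : Fin (k + 1) → M} (h : tail a = 0) :
    a = Pi.single 0 (a 0) := by
  funext i
  cases i using Fin.cases with
  | zero => simp
  | succ i => simpa [tail, Fin.succ_ne_zero] using congrFun h i

theorem eq_single_last_of_init_eq_zero {a : Fin (k + 1) → M} (h : init a = 0) :
    a = Pi.single (last k) (a (last k)) := by
  funext i
  cases i using Fin.lastCases with
  | last => simp
  | cast i => simpa [init, Fin.castSucc_ne_last] using congrFun h i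

theorem tail_single_zero (x : M) : tail (Pi.single 0 x : Fin (k + 1) → M) = 0 :=
  tail_update_zero ..

theorem init_single_last (x : M) : init (Pi.single (last k) x : Fin (k + 1) → M) = 0 :=
  init_update_last ..

theorem init_eq_zero_and_tail_eq_zero_iff (hk : 0 < k) {a : Fin (k + 1) → M} :
    init a = 0 ∧ tail a = 0 ↔ a = 0 := by
  refine ⟨fun ⟨h₁, h₂⟩ => ?_, fun h => h ▸ ⟨rfl, rfl⟩⟩
  have : a 0 = 0 := by simpa [init] using congrFun h₁ ⟨0, hk⟩
  rw [eq_single_zero_of_tail_eq_zero h₂, this, Pi.single_zero]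

end Fin

theorem ZMod.eq_one_of_ne_zero_two : ∀ c : ZMod 2, c ≠ 0 → c = 1 := by decide

theorem mem_span_singleton_zmod_two {V : Type*} [AddCommGroup V] [Module (ZMod 2) V] {x v : V} :
    x ∈ ZMod 2 ∙ v ↔ x = 0 ∨ x = v := by
  rw [mem_span_singleton]
  constructor
  · rintro ⟨c, rfl⟩
    rcases eq_or_ne c 0 with rfl | hc
    · simp
    · simp [ZMod.eq_one_of_ne_zero_two c hc]
  · rintro (rfl | rfl)
    exacts [⟨0, zero_smul _ _⟩, ⟨1, one_smul _ _⟩]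

theorem Matrix.rank_eq_one_iff {K m n : Type*} [Field K] [Finite m] [Fintype n]
    (M : Matrix m n K) : M.rank = 1 ↔ M ≠ 0 ∧ ∃ v, ∀ i, M i ∈ K ∙ v := by
  rw [rank_eq_finrank_span_row]
  set W := span K (Set.range M.row)
  have rows_le (v) : (∀ i, M i ∈ K ∙ v) ↔ W ≤ K ∙ v := by
    rw [span_le, Set.range_subset_iff]; rfl
  have le_one : (∃ v, ∀ i, M i ∈ K ∙ v) ↔ finrank K W ≤ 1 := by
    constructor
    · rintro ⟨v, hv⟩
      calc finrank K W ≤ finrank K (K ∙ v) := Submodule.finrank_mono ((rows_le v).1 hv)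
        _ ≤ 1 := by simpa using finrank_span_le_card ({v} : Set (n → K))
    · intro h
      have := (finrank_le_one_iff_isPrincipal W).1 h
      exact ⟨_, (rows_le _).2 (IsPrincipal.span_singleton_generator W).ge⟩
  have eq_zero : finrank K W = 0 ↔ M = 0 := by
    rw [Submodule.finrank_eq_zero, span_eq_bot, Set.forall_mem_range]
    exact ⟨funext, fun h i => congrFun h i⟩
  rw [ne_eq, ← eq_zero, le_one]
  omega

section Windows

variable {k : ℕ}

def WindowsIn (v : Fin k → ZMod 2) (a : Fin (k + 1) → ZMod 2) : Prop :=
  Fin.init a ∈ ZMod 2 ∙ v ∧ Fin.tail a ∈ ZMod 2 ∙ v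

def rankOneSeqs (k : ℕ) : Finset (Fin (k + 1) → ZMod 2) :=
  {Pi.single 0 1, Pi.single (Fin.last k) 1, 1}

theorem windowsIn_zero (v : Fin k → ZMod 2) : WindowsIn v 0 :=
  ⟨zero_mem _, zero_mem _⟩

theorem exists_windowsIn_of_mem_rankOneSeqs {a : Fin (k + 1) → ZMod 2}
    (ha : a ∈ rankOneSeqs k) : ∃ v, WindowsIn v a := by
  simp only [rankOneSeqs, Finset.mem_insert, Finset.mem_singleton] at ha
  rcases ha with rfl | rfl | rfl
  · refine ⟨Fin.init (Pi.single 0 1 : Fin (k + 1) → ZMod 2), mem_span_singleton_self _, ?_⟩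
    rw [Fin.tail_single_zero]
    exact zero_mem _
  · refine ⟨Fin.tail (Pi.single (Fin.last k) 1 : Fin (k + 1) → ZMod 2), ?_,
      mem_span_singleton_self _⟩
    rw [Fin.init_single_last]
    exact zero_mem _
  · exact ⟨1, mem_span_singleton_self _, mem_span_singleton_self _⟩

theorem windowsIn_classification (hk : 0 < k) {v : Fin k → ZMod 2} {a : Fin (k + 1) → ZMod 2}
    (ha : a ≠ 0) (h : WindowsIn v a) :
    (a = Pi.single 0 1 ∧ v = Fin.init a) ∨ (a = Pi.single (Fin.last k) 1 ∧ v = Fin.tail a) ∨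
      (a = 1 ∧ v = 1) := by
  obtain ⟨h₁ | h₁, h₂ | h₂⟩ := h.imp mem_span_singleton_zmod_two.1 mem_span_singleton_zmod_two.1
  · exact absurd ((Fin.init_eq_zero_and_tail_eq_zero_iff hk).1 ⟨h₁, h₂⟩) ha
  · have hsingle := Fin.eq_single_last_of_init_eq_zero h₁
    have hlast : a (Fin.last k) = 1 := ZMod.eq_one_of_ne_zero_two _ fun h0 =>
      ha (by rwa [h0, Pi.single_zero] at hsingle)
    exact Or.inr (Or.inl ⟨hlast ▸ hsingle, h₂.symm⟩)
  · have hsingle := Fin.eq_single_zero_of_tail_eq_zero h₂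
    have hzero : a 0 = 1 := ZMod.eq_one_of_ne_zero_two _ fun h0 =>
      ha (by rwa [h0, Pi.single_zero] at hsingle)
    exact Or.inl ⟨hzero ▸ hsingle, h₁.symm⟩
  · have hconst := Fin.eq_const_of_init_eq_tail (h₁.trans h₂.symm)
    have hzero : a 0 = 1 := ZMod.eq_one_of_ne_zero_two _ fun h0 =>
      ha (funext fun i => (hconst i).trans h0)
    have ha1 : a = 1 := funext fun i => (hconst i).trans hzero
    exact Or.inr (Or.inr ⟨ha1, by rw [← h₁, ha1]; rfl⟩)

theorem mem_rankOneSeqs_of_windowsIn (hk : 0 < k) {v : Fin k → ZMod 2}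
    {a : Fin (k + 1) → ZMod 2} (ha : a ≠ 0) (h : WindowsIn v a) : a ∈ rankOneSeqs k := by
  simp only [rankOneSeqs, Finset.mem_insert, Finset.mem_singleton]
  rcases windowsIn_classification hk ha h with ⟨rfl, -⟩ | ⟨rfl, -⟩ | ⟨rfl, -⟩ <;> simp

theorem eq_of_windowsIn (hk : 2 ≤ k) {v : Fin k → ZMod 2} {a b : Fin (k + 1) → ZMod 2}
    (ha : a ≠ 0) (hb : b ≠ 0) (hva : WindowsIn v a) (hvb : WindowsIn v b) : a = b := by
  -- the three possible rows `init e₀`, `tail e_k`, `𝟙` already differ in their first two entries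
  rcases windowsIn_classification (by omega) ha hva with ⟨rfl, rfl⟩ | ⟨rfl, rfl⟩ | ⟨rfl, rfl⟩ <;>
  rcases windowsIn_classification (by omega) hb hvb with ⟨rfl, h⟩ | ⟨rfl, h⟩ | ⟨rfl, h⟩ <;>
  first
  | rfl
  | have h0 := congrFun h ⟨0, by omega⟩
    have h1 := congrFun h ⟨1, by omega⟩
    simp [Fin.init, Fin.tail, Pi.single_apply, Fin.ext_iff] at h0 h1 <;> omega

theorem ne_zero_of_mem_rankOneSeqs {a : Fin (k + 1) → ZMod 2} (ha : a ∈ rankOneSeqs k) :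
    a ≠ 0 := by
  simp only [rankOneSeqs, Finset.mem_insert, Finset.mem_singleton] at ha
  rcases ha with rfl | rfl | rfl <;> simp

theorem card_rankOneSeqs (hk : 0 < k) : (rankOneSeqs k).card = 3 := by
  have h0 : (Pi.single 0 1 : Fin (k + 1) → ZMod 2) (Fin.last k) = 0 := by
    simp [Pi.single_apply, Fin.ext_iff]; omega
  have hl : (Pi.single (Fin.last k) 1 : Fin (k + 1) → ZMod 2) 0 = 0 := by
    simp [Pi.single_apply, Fin.ext_iff]; omega
  rw [rankOneSeqs, Finset.card_insert_of_notMem, Finset.card_pair]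
  · exact fun h => one_ne_zero (hl ▸ congrFun h 0).symm
  · simp only [Finset.mem_insert, Finset.mem_singleton, not_or]
    exact ⟨fun h => by simpa [h0] using congrFun h (Fin.last k),
      fun h => by simpa [h0] using congrFun h (Fin.last k)⟩

end Windows

section TuplesZeroOr

variable {n : ℕ} {M : Type*} [Zero M] [DecidableEq M]

def nonzeroTuplesZeroOr (n : ℕ) (a : M) : Finset (Fin n → M) :=
  (Fintype.piFinset fun _ => {0, a}).erase 0

@[simp]
theorem mem_nonzeroTuplesZeroOr {a : M} {x : Fin n → M} :
    x ∈ nonzeroTuplesZeroOr n a ↔ x ≠ 0 ∧ ∀ j, x j = 0 ∨ x j = a := by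
  simp [nonzeroTuplesZeroOr]

theorem card_nonzeroTuplesZeroOr {a : M} (ha : a ≠ 0) :
    (nonzeroTuplesZeroOr n a).card = 2 ^ n - 1 := by
  rw [nonzeroTuplesZeroOr, Finset.card_erase_of_mem (by simp), Fintype.card_piFinset,
    Finset.prod_const, Finset.card_pair ha.symm, Finset.card_univ, Fintype.card_fin]

theorem disjoint_nonzeroTuplesZeroOr {a b : M} (hab : a ≠ b) :
    Disjoint (nonzeroTuplesZeroOr n a) (nonzeroTuplesZeroOr n b) := by
  refine Finset.disjoint_left.2 fun x hxa hxb => ?_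
  obtain ⟨hx, hxa⟩ := mem_nonzeroTuplesZeroOr.1 hxa
  obtain ⟨j, hj⟩ := Function.ne_iff.mp hx
  exact hab (((hxa j).resolve_left hj).symm.trans
    (((mem_nonzeroTuplesZeroOr.1 hxb).2 j).resolve_left hj))

end TuplesZeroOr

section PersMat

variable {n k : ℕ}

theorem persMat_apply_two_mul (α : Fin n → Fin (k + 1) → ZMod 2) (j : Fin n)
    (h : 2 * j.val < 2 * n) : persMat n k α ⟨2 * j, h⟩ = Fin.init (α j) := by
  funext t
  simp only [persMat, Fin.init]
  congr <;> omega

theorem persMat_apply_two_mul_add_one (α : Fin n → Fin (k + 1) → ZMod 2) (j : Fin n)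
    (h : 2 * j.val + 1 < 2 * n) : persMat n k α ⟨2 * j + 1, h⟩ = Fin.tail (α j) := by
  funext t
  simp only [persMat, Fin.tail]
  congr <;> omega

theorem forall_persMat_row_iff (α : Fin n → Fin (k + 1) → ZMod 2)
    {p : (Fin k → ZMod 2) → Prop} :
    (∀ i, p (persMat n k α i)) ↔ ∀ j, p (Fin.init (α j)) ∧ p (Fin.tail (α j)) := by
  constructor
  · intro h j
    have := j.isLt
    exact ⟨persMat_apply_two_mul α j (by omega) ▸ h _,
      persMat_apply_two_mul_add_one α j (by omega) ▸ h _⟩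
  · rintro h ⟨i, hi⟩
    obtain ⟨j, rfl | rfl⟩ : ∃ j : Fin n, i = 2 * j ∨ i = 2 * j + 1 :=
      ⟨⟨i / 2, by omega⟩, by simp only; omega⟩
    · exact persMat_apply_two_mul α j hi ▸ (h j).1
    · exact persMat_apply_two_mul_add_one α j hi ▸ (h j).2

theorem persMat_eq_zero_iff (hk : 0 < k) {α : Fin n → Fin (k + 1) → ZMod 2} :
    persMat n k α = 0 ↔ α = 0 := by
  calc persMat n k α = 0 ↔ ∀ i, persMat n k α i = 0 := funext_iff
    _ ↔ ∀ j, α j = 0 := (forall_persMat_row_iff α (p := (· = 0))).trans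
      (forall_congr' fun _ => Fin.init_eq_zero_and_tail_eq_zero_iff hk)
    _ ↔ α = 0 := funext_iff.symm

theorem rank_persMat_eq_one_iff_windowsIn (hk : 0 < k) {α : Fin n → Fin (k + 1) → ZMod 2} :
    (persMat n k α).rank = 1 ↔ α ≠ 0 ∧ ∃ v, ∀ j, WindowsIn v (α j) := by
  rw [Matrix.rank_eq_one_iff, ne_eq, persMat_eq_zero_iff hk]
  simp_rw [forall_persMat_row_iff α]
  rfl

theorem rank_persMat_eq_one_iff (hk : 2 ≤ k) {α : Fin n → Fin (k + 1) → ZMod 2} :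
    (persMat n k α).rank = 1 ↔ ∃ a ∈ rankOneSeqs k, α ∈ nonzeroTuplesZeroOr n a := by
  rw [rank_persMat_eq_one_iff_windowsIn (by omega)]
  constructor
  · rintro ⟨hα, v, hv⟩
    obtain ⟨j₀, hj₀⟩ := Function.ne_iff.mp hα
    refine ⟨α j₀, mem_rankOneSeqs_of_windowsIn (by omega) hj₀ (hv j₀),
      mem_nonzeroTuplesZeroOr.2 ⟨hα, fun j => or_iff_not_imp_left.2 fun hj => ?_⟩⟩
    exact eq_of_windowsIn hk hj hj₀ (hv j) (hv j₀)
  · rintro ⟨a, ha, hα⟩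
    obtain ⟨hα, hαa⟩ := mem_nonzeroTuplesZeroOr.1 hα
    obtain ⟨v, hv⟩ := exists_windowsIn_of_mem_rankOneSeqs ha
    refine ⟨hα, v, fun j => ?_⟩
    rcases hαa j with h | h <;> rw [h]
    exacts [windowsIn_zero v, hv]

end PersMat

theorem gamma_rank_one_general (n k : ℕ) (hk : 2 ≤ k) :
    Gamma n k 1 = 3 * (2 ^ n - 1) := by
  have hset : Finset.univ.filter (fun α => (persMat n k α).rank = 1) =
      (rankOneSeqs k).biUnion (nonzeroTuplesZeroOr n) := by
    ext α
    simp [rank_persMat_eq_one_iff hk]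
  rw [Gamma, Nat.card_eq_fintype_card, Fintype.card_subtype, hset,
    Finset.card_biUnion fun a _ b _ hab => disjoint_nonzeroTuplesZeroOr hab,
    Finset.sum_congr rfl fun a ha => card_nonzeroTuplesZeroOr (ne_zero_of_mem_rankOneSeqs ha),
    Finset.sum_const, card_rankOneSeqs (by omega), smul_eq_mul]

theorem gamma_rank_one (n k : ℕ) (hn : 1 ≤ n) (hk : 2 ≤ k) :
    Gamma n k 1 = 3 * (2 ^ n - 1) :=
  gamma_rank_one_general n k hk
end

section
/- For n ≥ 1, k ≥ 1, and q ≥ 1, the number of solutions (Y₁,U₁^{(1)},…,U_n^{(1)},…,Y_q,U₁^{(q)},…,U_n^{(q)}) ∈ (F₂[T])^{(n+1)q}, with deg Y_i ≤ k−1 and deg U_j^{(i)} ≤ 1, of the system ∑_{i=1}^q Y_i U_j^{(i)} = 0 for j = 1,…,n, equals 2^{q(2n+k) − (k+1)n} · ∑_{i=0}^{min(2n,k)} Γ_i · 2^{−iq}, where Γ_i is the number of n-times persymmetric 2n×k matrices over F₂ of rank i. -/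
/-!
Count by additive characters. With `ψ` the sign character of `F₂`, the number of coefficient
tuples `c` on which the `n(k+1)` coefficients `W(c)` of the system vanish is
`2^{-n(k+1)} ∑_β ∑_c ψ(β ⬝ W(c))`. Writing `β = (α⁽ʲ⁾)_j`, the pairing of `α⁽ʲ⁾` with the
coefficients of `Yᵢ U_j⁽ⁱ⁾` is `uᵢ ⬝ A_α yᵢ`, where `A_α` is the persymmetric matrix of `α` (its
rows are the windows of `α⁽ʲ⁾` met by the two coefficients of `U_j⁽ⁱ⁾`). So the sum over `c`
factors into the `q`-th power of `∑_{y,u} ψ(u ⬝ A_α y) = 2^{2n} #ker A_α = 2^{2n + k - rank A_α}`,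
and grouping the `α` by the rank of `A_α` gives the formula.
-/

open Finset Matrix Polynomial

namespace AddChar

theorem map_sum_eq_prod {ι A M : Type*} [AddCommMonoid A] [CommMonoid M] (ψ : AddChar A M)
    (s : Finset ι) (f : ι → A) : ψ (∑ i ∈ s, f i) = ∏ i ∈ s, ψ (f i) :=
  map_prod ψ.toMonoidHom (fun i => Multiplicative.ofAdd (f i)) s

section DotProduct

variable {K R ι : Type*} [DivisionRing K] [Fintype K] [DecidableEq K] [CommRing R] [IsDomain R]
  [Fintype ι] [DecidableEq ι] {ψ : AddChar K R}

theorem sum_apply_dotProduct (hψ : ψ ≠ 0) (v : ι → K) :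
    ∑ β : ι → K, ψ (β ⬝ᵥ v) = if v = 0 then (Fintype.card (ι → K) : R) else 0 := by
  let φ : AddChar (ι → K) R :=
    ψ.compAddMonoidHom (AddMonoidHom.mk' (· ⬝ᵥ v) fun β γ => add_dotProduct β γ v)
  have hφ : φ = 0 ↔ v = 0 := by
    refine ⟨fun h => ?_, fun h => ?_⟩
    · by_contra hv
      obtain ⟨a, ha⟩ := Function.ne_iff.mp hv
      obtain ⟨t, ht⟩ := ne_zero_iff.mp hψ
      have := DFunLike.congr_fun h (Pi.single a (t / v a))
      simp [φ, single_dotProduct, div_mul_cancel₀ _ ha] at this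
      exact ht this
    · ext β
      simp [φ, h]
  classical
  exact (sum_eq_ite φ).trans (by simp only [hφ])

theorem card_mul_natCard_eq_sum_apply_dotProduct (hψ : ψ ≠ 0) {X : Type*} [Fintype X]
    (W : X → ι → K) :
    (Fintype.card (ι → K) * Nat.card {x // W x = 0} : R) = ∑ β : ι → K, ∑ x, ψ (β ⬝ᵥ W x) := by
  classical
  rw [Finset.sum_comm]
  simp only [sum_apply_dotProduct hψ]
  rw [Finset.sum_ite, sum_const, sum_const_zero, add_zero, nsmul_eq_mul, Nat.card_eq_fintype_card,
    Fintype.card_subtype, mul_comm]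

end DotProduct

end AddChar

section FiniteField

variable {K : Type*} [Field K] [Fintype K] {m l : Type*} [Fintype l]

theorem Matrix.natCard_mulVec_eq_zero (A : Matrix m l K) :
    Nat.card {y : l → K // A *ᵥ y = 0} = Fintype.card K ^ (Fintype.card l - A.rank) := by
  have e : {y : l → K // A *ᵥ y = 0} ≃ LinearMap.ker A.mulVecLin :=
    Equiv.subtypeEquivRight fun y => by simp [LinearMap.mem_ker]
  have hrank := LinearMap.finrank_range_add_finrank_ker A.mulVecLin
  rw [Module.finrank_fintype_fun_eq_card] at hrank
  rw [Nat.card_congr e, Module.natCard_eq_pow_finrank (K := K), Nat.card_eq_fintype_card,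
    Matrix.rank]
  congr 1
  omega

theorem AddChar.sum_sum_apply_dotProduct_mulVec [DecidableEq K] [Fintype m] [DecidableEq m]
    [DecidableEq l] {R : Type*} [CommRing R] [IsDomain R] {ψ : AddChar K R} (hψ : ψ ≠ 0)
    (A : Matrix m l K) :
    ∑ y : l → K, ∑ u : m → K, ψ (u ⬝ᵥ A *ᵥ y) =
      (Fintype.card K ^ Fintype.card m * Fintype.card K ^ (Fintype.card l - A.rank) : ℕ) := by
  rw [Finset.sum_comm, ← card_mul_natCard_eq_sum_apply_dotProduct hψ (A *ᵥ ·),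
    A.natCard_mulVec_eq_zero, Fintype.card_fun]
  push_cast
  rfl

end FiniteField

namespace Polynomial

variable {R : Type*} [CommRing R]

theorem sum_mul_coeff_mul_of_natDegree_le_one {k : ℕ} (α : Fin (k + 1) → R) {Y U : R[X]}
    (hY : Y.degree < k) (hU : U.natDegree ≤ 1) :
    ∑ m : Fin (k + 1), α m * (Y * U).coeff m =
      ∑ b : Fin 2, U.coeff b * ∑ a : Fin k, α ⟨a + b, by omega⟩ * Y.coeff a := by
  have hYk : Y.coeff k = 0 := coeff_eq_zero_of_degree_lt hY
  have hcoeff : ∀ m, (Y * U).coeff m = U.coeff 0 * Y.coeff m + U.coeff 1 * (Y * X).coeff m := by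
    intro m
    conv_lhs => rw [eq_X_add_C_of_natDegree_le_one hU]
    rw [show Y * (C (U.coeff 1) * X + C (U.coeff 0)) = C (U.coeff 0) * Y + C (U.coeff 1) * (Y * X)
      by ring, coeff_add, coeff_C_mul, coeff_C_mul]
  simp only [hcoeff, mul_add, sum_add_distrib, Fin.sum_univ_two, mul_sum]
  rw [Fin.sum_univ_castSucc, Fin.sum_univ_succ]
  simp only [Fin.val_castSucc, Fin.val_last, hYk, Fin.val_zero, coeff_mul_X_zero, Fin.val_succ,
    Fin.val_one, coeff_mul_X, mul_zero, add_zero, zero_add]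
  congr 1 <;> exact sum_congr rfl fun a _ => mul_left_comm _ _ _

theorem eq_zero_iff_forall_coeff_fin_eq_zero {n : ℕ} {p : R[X]} (hp : p.natDegree < n) :
    p = 0 ↔ ∀ m : Fin n, p.coeff m = 0 := by
  refine ⟨fun h m => by simp [h], fun h => ext fun m => ?_⟩
  by_cases hm : m < n
  · exact h ⟨m, hm⟩
  · exact coeff_eq_zero_of_natDegree_lt (by omega)

theorem degree_le_natCast_pred_iff {p : R[X]} {k : ℕ} (hk : 1 ≤ k) :
    p.degree ≤ (k - 1 : ℕ) ↔ p.natDegree < k := by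
  rw [← natDegree_le_iff_degree_le]
  omega

end Polynomial

section System

variable {R : Type*} [CommRing R] [DecidableEq R] (n k q : ℕ)

/-- `c i = (y, u)` stands for `Yᵢ = ∑ₐ y a Tᵃ` and `U_j⁽ⁱ⁾ = u (j, 0) + u (j, 1) T`. -/
noncomputable def systemPoly (c : Fin q → (Fin k → R) × (Fin n × Fin 2 → R)) (j : Fin n) : R[X] :=
  ∑ i, ofFn k (c i).1 * ofFn 2 fun b => (c i).2 (j, b)

noncomputable def systemCoeffs (c : Fin q → (Fin k → R) × (Fin n × Fin 2 → R)) :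
    Fin n × Fin (k + 1) → R :=
  fun p => (systemPoly n k q c p.1).coeff p.2

def windowMatrix (β : Fin n × Fin (k + 1) → R) : Matrix (Fin n × Fin 2) (Fin k) R :=
  fun p a => β (p.1, ⟨a + p.2, by omega⟩)

variable {n k q}

theorem systemCoeffs_eq_zero_iff (hk : 1 ≤ k) (c : Fin q → (Fin k → R) × (Fin n × Fin 2 → R)) :
    systemCoeffs n k q c = 0 ↔ ∀ j, systemPoly n k q c j = 0 := by
  have hdeg : ∀ j, (systemPoly n k q c j).natDegree < k + 1 := by
    intro j
    refine Nat.lt_succ_of_le (natDegree_sum_le_of_forall_le _ _ fun i _ => ?_)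
    have hY := ofFn_natDegree_lt hk (c i).1
    have hU := ofFn_natDegree_lt one_le_two fun b => (c i).2 (j, b)
    exact natDegree_mul_le.trans (by omega)
  simp only [eq_zero_iff_forall_coeff_fin_eq_zero (hdeg _), funext_iff, Prod.forall]
  rfl

theorem natCard_solutions_eq_natCard_systemCoeffs (hk : 1 ≤ k) :
    Nat.card {p : (Fin q → R[X]) × (Fin q → Fin n → R[X]) //
        (∀ i, (p.1 i).degree ≤ (k - 1 : ℕ)) ∧ (∀ i j, (p.2 i j).degree ≤ 1) ∧
          (∀ j, ∑ i, p.1 i * p.2 i j = 0)} =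
      Nat.card {c : Fin q → (Fin k → R) × (Fin n × Fin 2 → R) // systemCoeffs n k q c = 0} := by
  symm
  refine Nat.card_eq_of_bijective (fun c => ⟨(fun i => ofFn k (c.1 i).1,
    fun i j => ofFn 2 fun b => (c.1 i).2 (j, b)), fun i => ?_, fun i j => ?_,
    (systemCoeffs_eq_zero_iff hk _).mp c.2⟩) ⟨fun c c' h => ?_, ?_⟩
  · exact (degree_le_natCast_pred_iff hk).mpr (ofFn_natDegree_lt hk _)
  · exact (degree_le_natCast_pred_iff one_le_two).mpr (ofFn_natDegree_lt one_le_two _)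
  · simp only [Subtype.mk.injEq, Prod.mk.injEq, funext_iff, (injective_ofFn _).eq_iff] at h
    ext i : 2
    exact Prod.ext (funext (h.1 i)) (funext fun p => h.2 i p.1 p.2)
  · rintro ⟨⟨Y, U⟩, hY, hU, hsum⟩
    have hY' : ∀ i, ofFn k (toFn k (Y i)) = Y i := fun i =>
      ofFn_comp_toFn_eq_id_of_natDegree_lt ((degree_le_natCast_pred_iff hk).mp (hY i))
    have hU' : ∀ i j, ofFn 2 (toFn 2 (U i j)) = U i j := fun i j =>
      ofFn_comp_toFn_eq_id_of_natDegree_lt ((degree_le_natCast_pred_iff one_le_two).mp (hU i j))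
    refine ⟨⟨fun i => (toFn k (Y i), fun p => toFn 2 (U i p.1) p.2), ?_⟩, ?_⟩
    · exact (systemCoeffs_eq_zero_iff hk _).mpr (by simpa only [systemPoly, hY', hU'] using hsum)
    · simp only [hY', hU']

theorem dotProduct_systemCoeffs (β : Fin n × Fin (k + 1) → R)
    (c : Fin q → (Fin k → R) × (Fin n × Fin 2 → R)) :
    β ⬝ᵥ systemCoeffs n k q c = ∑ i, (c i).2 ⬝ᵥ windowMatrix n k β *ᵥ (c i).1 := by
  have hwindow : ∀ i j, ∑ m : Fin (k + 1), β (j, m) *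
      (ofFn k (c i).1 * ofFn 2 (fun b => (c i).2 (j, b))).coeff m =
        ∑ b : Fin 2, (c i).2 (j, b) * ∑ a, windowMatrix n k β (j, b) a * (c i).1 a := by
    intro i j
    rw [sum_mul_coeff_mul_of_natDegree_le_one _ (ofFn_degree_lt _)
      (Nat.le_of_lt_succ (ofFn_natDegree_lt one_le_two _))]
    simp [windowMatrix]
  calc β ⬝ᵥ systemCoeffs n k q c
      = ∑ i, ∑ j, ∑ m : Fin (k + 1), β (j, m) *
          (ofFn k (c i).1 * ofFn 2 (fun b => (c i).2 (j, b))).coeff m := by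
        simp only [dotProduct, systemCoeffs, systemPoly, finsetSum_coeff, mul_sum,
          Fintype.sum_prod_type]
        exact (sum_congr rfl fun j _ => sum_comm).trans sum_comm
    _ = ∑ i, (c i).2 ⬝ᵥ windowMatrix n k β *ᵥ (c i).1 := by
        simp only [hwindow, dotProduct, mulVec, Fintype.sum_prod_type]

end System

theorem AddChar.card_pow_mul_natCard_systemCoeffs_eq_zero {K R : Type*} [Field K] [Fintype K]
    [DecidableEq K] [CommRing R] [IsDomain R] {ψ : AddChar K R} (hψ : ψ ≠ 0) (n k q : ℕ) :
    (Fintype.card K ^ (n * (k + 1)) *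
        Nat.card {c : Fin q → (Fin k → K) × (Fin n × Fin 2 → K) // systemCoeffs n k q c = 0} : R) =
      ∑ β : Fin n × Fin (k + 1) → K,
        (((Fintype.card K ^ (n * 2) * Fintype.card K ^ (k - (windowMatrix n k β).rank)) ^ q : ℕ) :
          R) := by
  rw [← Nat.cast_pow, show Fintype.card K ^ (n * (k + 1)) = Fintype.card (Fin n × Fin (k + 1) → K)
    by simp, card_mul_natCard_eq_sum_apply_dotProduct hψ]
  refine sum_congr rfl fun β _ => ?_
  simp only [dotProduct_systemCoeffs, map_sum_eq_prod]
  rw [← Fintype.sum_pow fun x : (Fin k → K) × (Fin n × Fin 2 → K) =>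
      ψ (x.2 ⬝ᵥ windowMatrix n k β *ᵥ x.1),
    Fintype.sum_prod_type, sum_sum_apply_dotProduct_mulVec hψ]
  simp

def rowEquiv (n : ℕ) : Fin n × Fin 2 ≃ Fin (2 * n) :=
  finProdFinEquiv.trans (finCongr (Nat.mul_comm n 2))

theorem persMat_submatrix_rowEquiv {n k : ℕ} (α : Fin n → Fin (k + 1) → ZMod 2) :
    (persMat n k α).submatrix (rowEquiv n) id = windowMatrix n k (Function.uncurry α) := by
  ext ⟨j, b⟩ a
  simp only [submatrix_apply, persMat, windowMatrix, rowEquiv, Equiv.trans_apply, finCongr_apply,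
    Fin.val_cast, finProdFinEquiv_apply_val, id_eq, Function.uncurry_apply_pair]
  congr 2 <;> omega

theorem rank_windowMatrix_uncurry {n k : ℕ} (α : Fin n → Fin (k + 1) → ZMod 2) :
    (windowMatrix n k (Function.uncurry α)).rank = (persMat n k α).rank := by
  rw [← persMat_submatrix_rowEquiv]
  exact rank_submatrix _ (rowEquiv n) (Equiv.refl _)

theorem sum_rank_windowMatrix_eq_sum_Gamma (n k : ℕ) (g : ℕ → ℚ) :
    ∑ β : Fin n × Fin (k + 1) → ZMod 2, g (windowMatrix n k β).rank =
      ∑ i ∈ range (min (2 * n) k + 1), (Gamma n k i : ℚ) * g i := by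
  classical
  rw [← (Equiv.curry _ _ _).symm.sum_comp]
  simp only [Equiv.curry_symm_apply, rank_windowMatrix_uncurry]
  have hmaps : ∀ α ∈ (univ : Finset (Fin n → Fin (k + 1) → ZMod 2)),
      (persMat n k α).rank ∈ range (min (2 * n) k + 1) := fun α _ =>
    mem_range.mpr (Nat.lt_succ_of_le
      (le_min (by simpa using rank_le_height _) (by simpa using rank_le_width _)))
  rw [← sum_fiberwise_of_maps_to hmaps]
  refine sum_congr rfl fun i _ => ?_
  rw [sum_congr rfl fun α hα => by rw [(mem_filter.mp hα).2], sum_const, nsmul_eq_mul, Gamma,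
    Nat.card_eq_fintype_card, Fintype.card_subtype]

theorem count_system_solutions_general (n k q : ℕ) (hk : 1 ≤ k) :
    (Nat.card {p : (Fin q → Polynomial (ZMod 2)) × (Fin q → Fin n → Polynomial (ZMod 2)) //
        (∀ i, (p.1 i).degree ≤ (k - 1 : ℕ)) ∧ (∀ i j, (p.2 i j).degree ≤ 1) ∧
          (∀ j, ∑ i, p.1 i * p.2 i j = 0)} : ℚ) =
      (2 : ℚ) ^ ((q * (2 * n + k) : ℤ) - (k + 1) * n) *
        ∑ i ∈ Finset.range (min (2 * n) k + 1), (Gamma n k i : ℚ) * (2 : ℚ) ^ (-(i * q : ℤ)) := by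
  have hψ : AddChar.zmodChar 2 (show (-1 : ℚ) ^ 2 = 1 by norm_num) ≠ 0 :=
    AddChar.ne_zero_iff.mpr ⟨1, by rw [AddChar.zmodChar_apply]; norm_num [ZMod.val_one]⟩
  have hcount := AddChar.card_pow_mul_natCard_systemCoeffs_eq_zero hψ n k q
  rw [← natCard_solutions_eq_natCard_systemCoeffs hk, ZMod.card,
    sum_rank_windowMatrix_eq_sum_Gamma n k fun r => ((2 ^ (n * 2) * 2 ^ (k - r)) ^ q : ℕ)] at hcount
  have hterm : ∀ i ∈ range (min (2 * n) k + 1), ((2 : ℚ) ^ (n * 2) * 2 ^ (k - i)) ^ q =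
      2 ^ (n * (k + 1)) * (2 ^ ((q * (2 * n + k) : ℤ) - (k + 1) * n) * 2 ^ (-(i * q : ℤ))) := by
    intro i hi
    have hik : i ≤ k := by have := mem_range.mp hi; omega
    rw [← pow_add, ← pow_mul, ← zpow_natCast,
      ← zpow_natCast (2 : ℚ) (n * (k + 1)), ← zpow_add₀ two_ne_zero, ← zpow_add₀ two_ne_zero]
    congr 1
    push_cast [Nat.cast_sub hik]
    ring
  apply mul_left_cancel₀ (pow_ne_zero (n * (k + 1)) (two_ne_zero : (2 : ℚ) ≠ 0))
  push_cast at hcount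
  rw [hcount, mul_sum, mul_sum]
  refine sum_congr rfl fun i hi => ?_
  rw [hterm i hi]
  ring

theorem count_system_solutions (n k q : ℕ) (hn : 1 ≤ n) (hk : 1 ≤ k) (hq : 1 ≤ q) :
    (Nat.card {p : (Fin q → Polynomial (ZMod 2)) × (Fin q → Fin n → Polynomial (ZMod 2)) //
        (∀ i, (p.1 i).degree ≤ (k - 1 : ℕ)) ∧ (∀ i j, (p.2 i j).degree ≤ 1) ∧
          (∀ j, ∑ i, p.1 i * p.2 i j = 0)} : ℚ) =
      (2 : ℚ) ^ ((q * (2 * n + k) : ℤ) - (k + 1) * n) *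
        ∑ i ∈ Finset.range (min (2 * n) k + 1), (Gamma n k i : ℚ) * (2 : ℚ) ^ (-(i * q : ℤ)) :=
  count_system_solutions_general n k q hk
end
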